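/- arXiv:1706.07851 — 6 statements merged into one kernel-verified Lean document; each statement's English description precedes it below -/
import Mathlib

section
/- For all integers k and ℓ with 1 ≤ ℓ < k, the number of surjective functions from Fin k onto Fin ℓ is at most √k · (k^k · ℓ^(k−ℓ)) / ((k−ℓ)^(k−ℓ) · e^ℓ) (as a real number, where e is Euler's number). -/
/-!
A surjection `g : α → β` is determined by a section `σ : β ↪ α` of it together with its values
off the range of `σ`, so there are at most `(#α)! / (#α - #β)! · #β ^ (#α - #β)` surjections.
Since `n! / (√n (n/e)^n)` decreases in `n`, the falling factorial `k! / (k - ℓ)!` is at most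
`√(k / (k - ℓ)) · k^k / ((k - ℓ)^(k - ℓ) e^ℓ)`.
-/

open Function Real
open scoped Nat

namespace Fintype

variable {α β : Type*} [Fintype α] [DecidableEq α] [Fintype β] [DecidableEq β]

theorem card_leftInverse_le (σ : β ↪ α) :
    card {g : α → β // LeftInverse g σ} ≤ card β ^ (card α - card β) := by
  have hrestrict :
      Injective fun (g : {g : α → β // LeftInverse g σ}) (a : ↥(Set.range σ)ᶜ) => g.1 a := by
    intro g₁ g₂ h
    ext a
    by_cases ha : a ∈ Set.range σ
    · obtain ⟨b, rfl⟩ := ha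
      rw [g₁.2 b, g₂.2 b]
    · exact congrFun h ⟨a, ha⟩
  calc card {g : α → β // LeftInverse g σ}
      ≤ card (↥(Set.range σ)ᶜ → β) := card_le_of_injective _ hrestrict
    _ = card β ^ (card α - card β) := by
      rw [card_fun, card_compl_set, Set.card_range_of_injective σ.injective]

theorem card_surjective_le :
    card {g : α → β // Surjective g} ≤
      (card α).descFactorial (card β) * card β ^ (card α - card β) := by
  let withSection (g : {g : α → β // Surjective g}) :
      Σ σ : β ↪ α, {g : α → β // LeftInverse g σ} :=
    ⟨⟨surjInv g.2, injective_surjInv g.2⟩, g.1, rightInverse_surjInv g.2⟩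
  have hinj : Injective withSection :=
    Injective.of_comp (f := fun p => p.2.1) Subtype.val_injective
  calc card {g : α → β // Surjective g}
      ≤ card (Σ σ : β ↪ α, {g : α → β // LeftInverse g σ}) := card_le_of_injective _ hinj
    _ = ∑ σ : β ↪ α, card {g : α → β // LeftInverse g σ} := card_sigma
    _ ≤ ∑ _σ : β ↪ α, card β ^ (card α - card β) :=
      Finset.sum_le_sum fun σ _ => card_leftInverse_le σ
    _ = (card α).descFactorial (card β) * card β ^ (card α - card β) := by
      rw [Finset.sum_const, Finset.card_univ, card_embedding_eq, smul_eq_mul]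

end Fintype

theorem Stirling.stirlingSeq_le_of_le {m n : ℕ} (hn : n ≠ 0) (hnm : n ≤ m) :
    stirlingSeq m ≤ stirlingSeq n := by
  obtain ⟨n, rfl⟩ := Nat.exists_eq_succ_of_ne_zero hn
  obtain ⟨m, rfl⟩ : ∃ m', m = m' + 1 := ⟨m - 1, by omega⟩
  exact stirlingSeq'_antitone (Nat.succ_le_succ_iff.mp hnm)

theorem Nat.descFactorial_mul_pow_mul_exp_le {k ℓ : ℕ} (h : ℓ < k) :
    (k.descFactorial ℓ : ℝ) * (((k - ℓ : ℕ) : ℝ) ^ (k - ℓ) * exp 1 ^ ℓ) ≤ √k * k ^ k := by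
  set n := k - ℓ
  have hn0 : n ≠ 0 := by omega
  have hn : (0 : ℝ) < n := by positivity
  have hk : (0 : ℝ) < k := Nat.cast_pos.mpr (Nat.zero_lt_of_lt h)
  have hfac : (k ! : ℝ) = n ! * k.descFactorial ℓ := by
    exact_mod_cast (Nat.factorial_mul_descFactorial h.le).symm
  have hexp : exp 1 ^ k = exp 1 ^ n * exp 1 ^ ℓ := by
    rw [← pow_add]
    congr 1
    omega
  have hS : (k.descFactorial ℓ : ℝ) * √n * n ^ n * exp 1 ^ ℓ ≤ √k * k ^ k := by
    have hmono := Stirling.stirlingSeq_le_of_le hn0 (Nat.sub_le k ℓ)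
    simp only [Stirling.stirlingSeq, hfac, div_pow, sqrt_mul zero_le_two, hexp] at hmono
    rw [div_le_div_iff₀ (by positivity) (by positivity)] at hmono
    field_simp at hmono
    exact hmono
  have hsqrt : (1 : ℝ) ≤ √n := one_le_sqrt.mpr (Nat.one_le_cast.mpr (by omega))
  calc (k.descFactorial ℓ : ℝ) * ((n : ℝ) ^ n * exp 1 ^ ℓ)
      ≤ k.descFactorial ℓ * (√n * n ^ n * exp 1 ^ ℓ) := by
        gcongr
        exact le_mul_of_one_le_left (by positivity) hsqrt
    _ ≤ √k * k ^ k := by simpa only [mul_assoc] using hS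

theorem num_surjections_le_stirling_general (k ℓ : ℕ) (hℓk : ℓ < k) :
    (Fintype.card {g : Fin k → Fin ℓ // Function.Surjective g} : ℝ) ≤
      Real.sqrt k * ((k : ℝ) ^ k * (ℓ : ℝ) ^ (k - ℓ)) /
        (((k : ℝ) - (ℓ : ℝ)) ^ (k - ℓ) * Real.exp 1 ^ ℓ) := by
  have hgap : (0 : ℝ) < ((k - ℓ : ℕ) : ℝ) := Nat.cast_pos.mpr (Nat.sub_pos_of_lt hℓk)
  have hcount : (Fintype.card {g : Fin k → Fin ℓ // Surjective g} : ℝ) ≤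
      k.descFactorial ℓ * (ℓ : ℝ) ^ (k - ℓ) := by
    exact_mod_cast Fintype.card_fin k ▸ Fintype.card_fin ℓ ▸
      Fintype.card_surjective_le (α := Fin k) (β := Fin ℓ)
  rw [← Nat.cast_sub hℓk.le, le_div_iff₀ (by positivity)]
  calc (Fintype.card {g : Fin k → Fin ℓ // Surjective g} : ℝ) *
        (((k - ℓ : ℕ) : ℝ) ^ (k - ℓ) * exp 1 ^ ℓ)
      ≤ k.descFactorial ℓ * (((k - ℓ : ℕ) : ℝ) ^ (k - ℓ) * exp 1 ^ ℓ) * (ℓ : ℝ) ^ (k - ℓ) := by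
        rw [mul_right_comm]
        gcongr
    _ ≤ √k * k ^ k * (ℓ : ℝ) ^ (k - ℓ) :=
        mul_le_mul_of_nonneg_right (Nat.descFactorial_mul_pow_mul_exp_le hℓk) (by positivity)
    _ = √k * ((k : ℝ) ^ k * (ℓ : ℝ) ^ (k - ℓ)) := mul_assoc _ _ _

/-- For all integers k and ℓ with 1 ≤ ℓ < k, the number of surjective
functions from `Fin k` onto `Fin ℓ` is at most
√k · (k^k · ℓ^(k−ℓ)) / ((k−ℓ)^(k−ℓ) · e^ℓ). -/
theorem num_surjections_le_stirling (k ℓ : ℕ) (hℓ : 1 ≤ ℓ) (hℓk : ℓ < k) :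
    (Fintype.card {g : Fin k → Fin ℓ // Function.Surjective g} : ℝ) ≤
      Real.sqrt k * ((k : ℝ) ^ k * (ℓ : ℝ) ^ (k - ℓ)) /
        (((k : ℝ) - (ℓ : ℝ)) ^ (k - ℓ) * Real.exp 1 ^ ℓ) :=
  num_surjections_le_stirling_general k ℓ hℓk
end

section
/- For every real number α with 0 < α < 1, (α/(1−α))^(1−α) · e^(−α) ≤ 0.649, where e is Euler's number and the exponentiation is real-valued. -/
lemma aux_exp_lb : (1000 : ℝ) / 649 ≤ Real.exp (763 / 1763) := by
  have h := Real.sum_le_exp_of_nonneg (x := (763 : ℝ) / 1763) (by norm_num) 6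
  refine le_trans ?_ h
  rw [Finset.sum_range_succ, Finset.sum_range_succ, Finset.sum_range_succ,
    Finset.sum_range_succ, Finset.sum_range_succ, Finset.sum_range_succ]
  norm_num [Nat.factorial]

lemma aux_B : -(763 : ℝ) / 1763 ≤ Real.log 0.649 := by
  have h : Real.exp (-(763 : ℝ) / 1763) ≤ 0.649 := by
    rw [neg_div, Real.exp_neg]
    rw [inv_le_iff_one_le_mul₀ (Real.exp_pos _)]
    nlinarith [aux_exp_lb]
  calc (-(763 : ℝ) / 1763) = Real.log (Real.exp (-(763 : ℝ) / 1763)) := (Real.log_exp _).symm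
  _ ≤ Real.log 0.649 := Real.log_le_log (Real.exp_pos _) h

lemma aux_A : Real.log 1.763 - 1 ≤ Real.log 0.649 := by
  have he : (1.763 : ℝ) ≤ 0.649 * Real.exp 1 := by
    have := Real.exp_one_gt_d9; nlinarith
  have h : Real.log 1.763 ≤ Real.log (0.649 * Real.exp 1) :=
    Real.log_le_log (by norm_num) he
  rw [Real.log_mul (by norm_num) (Real.exp_ne_zero 1), Real.log_exp] at h
  linarith

/-- For every real α with 0 < α < 1,
(α/(1−α))^(1−α) · e^(−α) ≤ 0.649 (real-valued exponentiation). -/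
theorem g_alpha_le (α : ℝ) (h0 : 0 < α) (h1 : α < 1) :
    (α / (1 - α)) ^ (1 - α) * Real.exp (-α) ≤ 0.649 := by
  have h1' : 0 < 1 - α := by linarith
  have hx : 0 < α / (1 - α) := div_pos h0 h1'
  set x := α / (1 - α) with hxdef
  have hrw : x ^ (1 - α) * Real.exp (-α) = Real.exp ((1 - α) * Real.log x - α) := by
    rw [Real.rpow_def_of_pos hx, ← Real.exp_add]
    ring_nf
  rw [hrw]
  have hlog : Real.log x ≤ Real.log 1.763 + x / 1.763 - 1 := by
    have h := Real.log_le_sub_one_of_pos (show (0:ℝ) < x / 1.763 from by positivity)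
    rw [Real.log_div (ne_of_gt hx) (by norm_num)] at h
    have : Real.log (1.763 : ℝ) = Real.log 1.763 := rfl
    linarith
  have hax : (1 - α) * x = α := by
    rw [hxdef]; field_simp
  have hexp : (1 - α) * Real.log x - α ≤ Real.log 0.649 := by
    have h2 : (1 - α) * Real.log x ≤ (1 - α) * (Real.log 1.763 - 1) + α / 1.763 := by
      have := mul_le_mul_of_nonneg_left hlog (le_of_lt h1')
      have hax' : (1 - α) * (x / 1.763) = α / 1.763 := by
        linear_combination hax / 1.763
      nlinarith
    have hA := aux_A
    have hB := aux_B
    norm_num at h2 hA hB ⊢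
    nlinarith [mul_le_mul_of_nonneg_left hA h1'.le, mul_le_mul_of_nonneg_left hB h0.le]
  calc Real.exp ((1 - α) * Real.log x - α) ≤ Real.exp (Real.log 0.649) :=
        Real.exp_le_exp.mpr hexp
  _ = 0.649 := Real.exp_log (by norm_num)
end

section
/- If an encoded st-DAG with flow (A, n, src, dst, f) admits a flow decomposition into k paths, then the set of distinct flow values {f a : a ∈ A} has at most 2^k elements. -/
/-- An s–t path in an encoded st-DAG on vertex set `Fin n` (source `0`, sink `n-1`):
a nonempty list of arcs starting at the source, ending at the sink, and with
consecutive arcs matching head-to-tail. -/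
def IsSTPath {A : Type} {n : ℕ} (src dst : A → Fin n) (p : List A) : Prop :=
  p ≠ [] ∧ (∀ a, p.head? = some a → (src a : ℕ) = 0) ∧
    (∀ a, p.getLast? = some a → (dst a : ℕ) = n - 1) ∧
    List.Chain' (fun a b => dst a = src b) p

/-- A flow decomposition of the encoded st-DAG with flow `(A, n, src, dst, f)` into
`k` s–t paths `p` with positive integer weights `w`: every arc's flow value is the
sum of the weights of the paths containing it. -/
def IsFlowDecomp {A : Type} [Fintype A] [DecidableEq A] {n k : ℕ}
    (src dst : A → Fin n) (f : A → ℕ) (p : Fin k → List A) (w : Fin k → ℕ) : Prop :=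
  (∀ i, IsSTPath src dst (p i)) ∧ (∀ i, 1 ≤ w i) ∧
    ∀ a, f a = ∑ i, if a ∈ p i then w i else 0

/-- If an encoded st-DAG with flow admits a flow decomposition into
`k` paths, then the set of distinct flow values has at most `2^k` elements. -/
theorem distinct_flow_values_le {A : Type} [Fintype A] [DecidableEq A] {n k : ℕ}
    (src dst : A → Fin n) (f : A → ℕ) (hn : 2 ≤ n)
    (hacyc : ∀ a, src a < dst a)
    (hdecomp : ∃ (p : Fin k → List A) (w : Fin k → ℕ), IsFlowDecomp src dst f p w) :
    (Finset.univ.image f).card ≤ 2 ^ k := by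
  obtain ⟨p, w, hpaths, hw, hf⟩ := hdecomp
  have hsub : Finset.univ.image f ⊆
      Finset.univ.image (fun s : Finset (Fin k) => ∑ i ∈ s, w i) := by
    intro v hv
    simp only [Finset.mem_image, Finset.mem_univ, true_and] at hv ⊢
    obtain ⟨a, ha⟩ := hv
    refine ⟨Finset.univ.filter (fun i => a ∈ p i), ?_⟩
    rw [Finset.sum_filter, ← hf a, ha]
  calc (Finset.univ.image f).card ≤ _ := Finset.card_le_card hsub
    _ ≤ (Finset.univ : Finset (Finset (Fin k))).card := Finset.card_image_le
    _ = 2 ^ k := by simp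
end

section
/- Let (A, n, src, dst, f) be an encoded st-DAG with flow, let u be a vertex with 0 < u < n−1 that has exactly one out-arc e (i.e., e is the unique arc with src e = u), let v = dst e, and suppose f e = Σ_{a : dst a = u} f a. Define the contracted instance on arc set A' = A \ {e}, same vertex count n, the same src, the flow f restricted to A', and dst' a = v if dst a = u and dst' a = dst a otherwise. Then for every k, (A, n, src, dst, f) admits a flow decomposition into k paths if and only if the contracted instance (A', n, src, dst', f|A') admits a flow decomposition into k paths. -/
section Contraction

variable {A : Type} {n : ℕ}

theorem isSTPath_map {B : Type} (src dst : A → Fin n) (g : B → A) (l : List B) :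
    IsSTPath (fun b => src (g b)) (fun b => dst (g b)) l ↔ IsSTPath src dst (l.map g) := by
  simp only [IsSTPath, ne_eq, List.map_eq_nil_iff, List.head?_map, List.getLast?_map,
    Option.map_eq_some_iff, forall_exists_index, and_imp, forall_apply_eq_imp_iff₂]
  exact and_congr_right fun _ => and_congr_right fun _ => and_congr_right fun _ =>
    (List.isChain_map (R := fun a b => dst a = src b) g).symm

theorem inj_on_dst_of_isChain {src dst : A → Fin n} (hacyc : ∀ a, src a < dst a) {l : List A}
    (hl : l.IsChain fun a b => dst a = src b) :
    ∀ ⦃a⦄, a ∈ l → ∀ ⦃b⦄, b ∈ l → dst a = dst b → a = b := by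
  have hlt : (l.map dst).IsChain (· < ·) :=
    (List.isChain_map _).mpr <| hl.imp fun a b (h : dst a = src b) => h ▸ hacyc b
  exact List.inj_on_of_nodup_map (List.isChain_iff_pairwise.mp hlt).nodup

-- Implicit instances: membership in a list of subtype elements has two `Decidable` instances
-- that are equal but not reducibly so, and this lemma has to relate them.
theorem sum_ite_congr {ι : Type*} [Fintype ι] {P Q : ι → Prop} {_ : DecidablePred P}
    {_ : DecidablePred Q} (h : ∀ i, P i ↔ Q i) {w : ι → ℕ} :
    ∑ i, (if P i then w i else 0) = ∑ i, if Q i then w i else 0 :=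
  Finset.sum_congr rfl fun i _ => if_congr (h i) rfl rfl

theorem sum_filter_dst_eq_ite_mem [Fintype A] [DecidableEq A] {src dst : A → Fin n}
    (hacyc : ∀ a, src a < dst a) (u : Fin n) {p : List A}
    (hp : p.IsChain fun a b => dst a = src b) (w : ℕ) :
    ∑ a ∈ Finset.univ.filter (fun a => dst a = u), (if a ∈ p then w else 0) =
      if ∃ a ∈ p, dst a = u then w else 0 := by
  split_ifs with h
  · obtain ⟨a, hap, hau⟩ := h
    rw [Finset.sum_eq_single_of_mem a (by simp [hau]), if_pos hap]
    intro b hb hba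
    exact if_neg fun hbp => hba (inj_on_dst_of_isChain hacyc hp hbp hap
      ((Finset.mem_filter.mp hb).2.trans hau.symm))
  · exact Finset.sum_eq_zero fun a ha => if_neg fun hap => h ⟨a, hap, (Finset.mem_filter.mp ha).2⟩

theorem flow_eq_sum_of_inflow [Fintype A] [DecidableEq A] {ι : Type*} [Fintype ι]
    {src dst : A → Fin n} (hacyc : ∀ a, src a < dst a) {u : Fin n} {e : A} (hdst : dst e ≠ u)
    {f : A → ℕ} {p : ι → List A} {w : ι → ℕ} (hp : ∀ i, (p i).IsChain fun a b => dst a = src b)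
    (hp_e : ∀ i, e ∈ p i ↔ ∃ a ∈ p i, dst a = u)
    (hf : ∀ a ≠ e, f a = ∑ i, if a ∈ p i then w i else 0)
    (hflow : f e = ∑ a ∈ Finset.univ.filter (fun a => dst a = u), f a) :
    f e = ∑ i, if e ∈ p i then w i else 0 :=
  calc f e = ∑ a ∈ Finset.univ.filter (fun a => dst a = u), ∑ i, if a ∈ p i then w i else 0 :=
        hflow.trans <| Finset.sum_congr rfl fun a ha =>
          hf a fun hae => hdst (hae ▸ (Finset.mem_filter.mp ha).2)
    _ = ∑ i, ∑ a ∈ Finset.univ.filter (fun a => dst a = u), if a ∈ p i then w i else 0 :=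
        Finset.sum_comm
    _ = ∑ i, if e ∈ p i then w i else 0 := Finset.sum_congr rfl fun i _ =>
        (sum_filter_dst_eq_ite_mem hacyc u (hp i) _).trans (if_congr (hp_e i).symm rfl rfl)

variable (src dst : A → Fin n) (u : Fin n) (e : A)

def contractDst (a : A) : Fin n := if dst a = u then dst e else dst a

def expandPath (l : List A) : List A := l.flatMap fun a => if dst a = u then [a, e] else [a]

@[simp] theorem expandPath_nil : expandPath dst u e [] = [] := rfl

theorem expandPath_cons (a : A) (l : List A) :
    expandPath dst u e (a :: l) =
      if dst a = u then a :: e :: expandPath dst u e l else a :: expandPath dst u e l := by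
  by_cases h : dst a = u <;> simp [expandPath, h]

variable {dst u e}

theorem mem_expandPath {b : A} {l : List A} :
    b ∈ expandPath dst u e l ↔ b ∈ l ∨ b = e ∧ ∃ a ∈ l, dst a = u := by
  induction l with
  | nil => simp
  | cons a l ih => by_cases h : dst a = u <;> simp [expandPath_cons, h, ih] <;> grind

theorem head?_expandPath (l : List A) : (expandPath dst u e l).head? = l.head? := by
  cases l with
  | nil => rfl
  | cons a l => by_cases h : dst a = u <;> simp [expandPath_cons, h]

theorem getLast?_map_expandPath (l : List A) :
    (expandPath dst u e l).getLast?.map dst = l.getLast?.map (contractDst dst u e) := by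
  induction l with
  | nil => rfl
  | cons a l ih =>
    cases l with
    | nil => by_cases h : dst a = u <;> simp [expandPath_cons, contractDst, h]
    | cons b l =>
      obtain ⟨c, L, hL⟩ : ∃ c L, expandPath dst u e (b :: l) = c :: L := by
        rw [expandPath_cons]; split_ifs <;> exact ⟨_, _, rfl⟩
      rw [List.getLast?_cons_cons, ← ih, expandPath_cons dst u e a, hL]
      split_ifs <;> rfl

theorem isChain_expandPath_iff (hsrce : src e = u) (l : List A) :
    (expandPath dst u e l).IsChain (fun a b => dst a = src b) ↔
      l.IsChain (fun a b => contractDst dst u e a = src b) := by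
  induction l with
  | nil => simp
  | cons a l ih =>
    by_cases h : dst a = u <;>
      simp [expandPath_cons, contractDst, List.isChain_cons, head?_expandPath, h, hsrce, ih]

theorem isSTPath_expandPath_iff (hsrce : src e = u) (l : List A) :
    IsSTPath src dst (expandPath dst u e l) ↔ IsSTPath src (contractDst dst u e) l := by
  have hnil : expandPath dst u e l = [] ↔ l = [] := by
    rw [← List.head?_eq_none_iff, head?_expandPath, List.head?_eq_none_iff]
  have hlast (P : Fin n → Prop) :
      (∀ a, (expandPath dst u e l).getLast? = some a → P (dst a)) ↔
        ∀ a, l.getLast? = some a → P (contractDst dst u e a) := by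
    have h := getLast?_map_expandPath (dst := dst) (u := u) (e := e) l
    generalize (expandPath dst u e l).getLast? = x at h ⊢
    generalize l.getLast? = y at h ⊢
    rcases x with _ | b <;> rcases y with _ | a <;> simp_all
  unfold IsSTPath
  rw [ne_eq, hnil, head?_expandPath, hlast (fun x => (x : ℕ) = n - 1)]
  exact and_congr_right fun _ => and_congr_right fun _ => and_congr_right fun _ =>
    isChain_expandPath_iff src hsrce l

theorem isSTPath_contract_iff (hsrce : src e = u) (q : List {a : A // a ≠ e}) :
    IsSTPath (fun a => src a.val) (fun a => contractDst dst u e a.val) q ↔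
      IsSTPath src dst (expandPath dst u e (q.map Subtype.val)) :=
  (isSTPath_map src (contractDst dst u e) Subtype.val q).trans
    (isSTPath_expandPath_iff src hsrce _).symm

theorem mem_expandPath_map_val {q : List {a : A // a ≠ e}} {a : {a : A // a ≠ e}} :
    a.val ∈ expandPath dst u e (q.map Subtype.val) ↔ a ∈ q := by
  simp [mem_expandPath, a.2]

theorem mem_expandPath_self_iff (hdst : dst e ≠ u) {l : List A} (he : e ∉ l) :
    e ∈ expandPath dst u e l ↔ ∃ a ∈ expandPath dst u e l, dst a = u := by
  simp only [mem_expandPath, he, false_or, true_and]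
  constructor
  · rintro ⟨a, hal, hau⟩
    exact ⟨a, .inl hal, hau⟩
  · rintro ⟨a, hal | ⟨rfl, -⟩, hau⟩
    exacts [⟨a, hal, hau⟩, absurd hau hdst]

variable [DecidableEq A]

theorem expandPath_filter_ne (hsrce : src e = u) (hdst : dst e ≠ u)
    (huniq : ∀ a, src a = u → a = e) :
    ∀ {l : List A}, l.IsChain (fun a b => dst a = src b) → (∀ a ∈ l.head?, src a ≠ u) →
      (∀ a ∈ l.getLast?, dst a ≠ u) → expandPath dst u e (l.filter (· ≠ e)) = l
  | [], _, _, _ => rfl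
  | [a], _, hhead, hlast => by
    have hae : a ≠ e := fun h => hhead a rfl (h ▸ hsrce)
    simp [expandPath_cons, hae, hlast a rfl]
  | a :: b :: l, hchain, hhead, hlast => by
    have hae : a ≠ e := fun h => hhead a rfl (h ▸ hsrce)
    obtain ⟨hab, hchain⟩ := List.isChain_cons_cons.mp hchain
    by_cases hau : dst a = u
    · have hbe : b = e := huniq b (hab ▸ hau)
      rw [hbe] at hchain hlast
      have hl := expandPath_filter_ne hsrce hdst huniq (List.isChain_cons.mp hchain).2
        (fun c hc => by rwa [← (List.isChain_cons.mp hchain).1 c hc])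
        (fun c hc => hlast c (List.mem_getLast?_cons (List.mem_getLast?_cons hc)))
      rw [hbe, List.filter_cons_of_pos (by simpa using hae), List.filter_cons_of_neg (by simp),
        expandPath_cons, if_pos hau, hl]
    · have hl := expandPath_filter_ne hsrce hdst huniq hchain
        (fun c hc => by rw [← Option.mem_some_iff.mp hc, ← hab]; exact hau)
        (fun c hc => hlast c (List.mem_getLast?_cons hc))
      rw [List.filter_cons_of_pos (by simpa using hae), expandPath_cons, if_neg hau, hl]

theorem exists_expandPath_map_val_eq (hu0 : 0 < (u : ℕ)) (hun : (u : ℕ) < n - 1)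
    (hsrce : src e = u) (hdst : dst e ≠ u) (huniq : ∀ a, src a = u → a = e) {p : List A}
    (hp : IsSTPath src dst p) :
    ∃ q : List {a : A // a ≠ e}, expandPath dst u e (q.map Subtype.val) = p := by
  obtain ⟨-, hhead, hlast, hchain⟩ := hp
  obtain ⟨q, hq⟩ : ∃ q : List {a : A // a ≠ e}, q.map Subtype.val = p.filter (· ≠ e) :=
    CanLift.prf _ fun a ha => by simpa using (List.mem_filter.mp ha).2
  refine ⟨q, hq ▸ expandPath_filter_ne src hsrce hdst huniq hchain ?_ ?_⟩
  · intro a ha hau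
    have := hhead a ha
    omega
  · intro a ha hau
    have := hlast a ha
    omega

end Contraction

theorem contract_arc_iff_general {A : Type} [Fintype A] [DecidableEq A] {n : ℕ}
    (src dst : A → Fin n) (f : A → ℕ)
    (hacyc : ∀ a, src a < dst a)
    (u : Fin n) (hu0 : 0 < (u : ℕ)) (hun : (u : ℕ) < n - 1)
    (e : A) (hsrce : src e = u) (huniq : ∀ a, src a = u → a = e)
    (hflow : f e = ∑ a ∈ Finset.univ.filter (fun a => dst a = u), f a)
    (k : ℕ) :
    (∃ (p : Fin k → List A) (w : Fin k → ℕ), IsFlowDecomp src dst f p w) ↔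
      (∃ (p : Fin k → List {a : A // a ≠ e}) (w : Fin k → ℕ),
        IsFlowDecomp (fun a => src a.val)
          (fun a => if dst a.val = u then dst e else dst a.val)
          (fun a => f a.val) p w) := by
  have hdst : dst e ≠ u := (hsrce ▸ hacyc e).ne'
  constructor
  · rintro ⟨p, w, hp, hw, hf⟩
    choose q hq using fun i => exists_expandPath_map_val_eq src hu0 hun hsrce hdst huniq (hp i)
    refine ⟨q, w, fun i => (isSTPath_contract_iff src hsrce (q i)).mpr (hq i ▸ hp i), hw,
      fun a => (hf a.val).trans <| sum_ite_congr fun i => hq i ▸ mem_expandPath_map_val⟩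
  · rintro ⟨q, w, hq, hw, hf⟩
    set p := fun i => expandPath dst u e ((q i).map Subtype.val)
    have hp i : IsSTPath src dst (p i) := (isSTPath_contract_iff src hsrce (q i)).mp (hq i)
    have hf_ne a (ha : a ≠ e) : f a = ∑ i, if a ∈ p i then w i else 0 :=
      (hf ⟨a, ha⟩).trans <| sum_ite_congr fun i => mem_expandPath_map_val.symm
    have hp_e i : e ∈ p i ↔ ∃ a ∈ p i, dst a = u := mem_expandPath_self_iff hdst (by simp)
    refine ⟨p, w, hp, hw, fun a => ?_⟩
    by_cases ha : a = e
    · exact ha ▸ flow_eq_sum_of_inflow hacyc hdst (fun i => (hp i).2.2.2) hp_e hf_ne hflow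
    · exact hf_ne a ha

/-- Contracting the unique out-arc `e` of an internal vertex `u`
(whose flow value equals the total in-flow of `u`) preserves, for every `k`, the
existence of a flow decomposition into `k` paths.  The contracted instance lives on
the arc set `A \ {e}`, keeps `src` and `f`, and redirects every arc with head `u`
to `v = dst e`. -/
theorem contract_arc_iff {A : Type} [Fintype A] [DecidableEq A] {n : ℕ}
    (src dst : A → Fin n) (f : A → ℕ) (hn : 2 ≤ n)
    (hacyc : ∀ a, src a < dst a)
    (u : Fin n) (hu0 : 0 < (u : ℕ)) (hun : (u : ℕ) < n - 1)
    (e : A) (hsrce : src e = u) (huniq : ∀ a, src a = u → a = e)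
    (hflow : f e = ∑ a ∈ Finset.univ.filter (fun a => dst a = u), f a)
    (k : ℕ) :
    (∃ (p : Fin k → List A) (w : Fin k → ℕ), IsFlowDecomp src dst f p w) ↔
      (∃ (p : Fin k → List {a : A // a ≠ e}) (w : Fin k → ℕ),
        IsFlowDecomp (fun a => src a.val)
          (fun a => if dst a.val = u then dst e else dst a.val)
          (fun a => f a.val) p w) :=
  contract_arc_iff_general src dst f hacyc u hu0 hun e hsrce huniq hflow k
end

section
/- Let k ≥ 1 and let w : Fin k → ℕ with w j ≥ 1 for all j. Let g₁ : Fin k → Fin m₁ and g₂ : Fin k → Fin m₂ be surjective with m₁ ≥ m₂ ≥ 1. Let M₁ be the multiset of fiber sums of g₁ (i.e., the multiset over a ∈ Fin m₁ of Σ_{j : g₁ j = a} w j) and let M₂ be the analogous multiset for g₂. Then 3·k ≥ 3·card(M₁ ∩ M₂) + 2·(card(M₁ − M₂) + card(M₂ − M₁)), where ∩ and − denote multiset intersection and multiset difference and card is multiset cardinality. -/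
/-- The multiset of fiber sums of the weights `w` under the routing `g`:
for each arc `a` of the cut, the sum of the weights of the paths routed over `a`. -/
def fiberSums {k m : ℕ} (g : Fin k → Fin m) (w : Fin k → ℕ) : Multiset ℕ :=
  Finset.univ.val.map fun a => ∑ j ∈ Finset.univ.filter (fun j => g j = a), w j

lemma card_fiberSums {k m : ℕ} (g : Fin k → Fin m) (w : Fin k → ℕ) :
    Multiset.card (fiberSums g w) = m := by
  simp [fiberSums]

/-- Paths that are alone in their fiber. -/
def lonely {k m : ℕ} (g : Fin k → Fin m) : Finset (Fin k) :=
  Finset.univ.filter (fun j => Finset.univ.filter (fun i => g i = g j) = {j})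

lemma lonely_count {k m : ℕ} (g : Fin k → Fin m) (hg : Function.Surjective g) :
    2 * m ≤ (lonely g).card + k := by
  have h1 : k = ∑ a : Fin m, (Finset.univ.filter (fun j => g j = a)).card := by
    have := Finset.card_eq_sum_card_fiberwise
      (fun (x : Fin k) (_ : x ∈ Finset.univ) => Finset.mem_univ (g x))
    simpa using this
  have h2 : (lonely g).card = ∑ a : Fin m, ((lonely g).filter (fun j => g j = a)).card :=
    Finset.card_eq_sum_card_fiberwise (fun x _ => Finset.mem_univ (g x))
  have h3 : ∀ a : Fin m,
      2 ≤ (Finset.univ.filter (fun j => g j = a)).card +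
          ((lonely g).filter (fun j => g j = a)).card := by
    intro a
    obtain ⟨j, hj⟩ := hg a
    have hjmem : j ∈ Finset.univ.filter (fun j => g j = a) := by simp [hj]
    have hpos : 1 ≤ (Finset.univ.filter (fun j => g j = a)).card :=
      Finset.card_pos.mpr ⟨j, hjmem⟩
    rcases Nat.lt_or_ge (Finset.univ.filter (fun j => g j = a)).card 2 with h | h
    · have hcard : (Finset.univ.filter (fun j => g j = a)).card = 1 := by omega
      obtain ⟨x, hx⟩ := Finset.card_eq_one.mp hcard
      have hxa : g x = a := by
        have : x ∈ Finset.univ.filter (fun j => g j = a) := by simp [hx]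
        simpa using this
      have hxl : x ∈ (lonely g).filter (fun j => g j = a) := by
        simp only [Finset.mem_filter, lonely, Finset.mem_univ, true_and]
        exact ⟨by rw [hxa]; exact hx, hxa⟩
      have : 1 ≤ ((lonely g).filter (fun j => g j = a)).card :=
        Finset.card_pos.mpr ⟨x, hxl⟩
      omega
    · omega
  calc 2 * m = ∑ _a : Fin m, 2 := by simp [mul_comm]
    _ ≤ ∑ a : Fin m, ((Finset.univ.filter (fun j => g j = a)).card +
          ((lonely g).filter (fun j => g j = a)).card) :=
        Finset.sum_le_sum (fun a _ => h3 a)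
    _ = (lonely g).card + k := by rw [Finset.sum_add_distrib, ← h1, ← h2, Nat.add_comm]

lemma map_le_fiberSums {k m : ℕ} (g : Fin k → Fin m) (w : Fin k → ℕ)
    (T : Finset (Fin k))
    (hT : ∀ j ∈ T, Finset.univ.filter (fun i => g i = g j) = {j}) :
    T.val.map w ≤ fiberSums g w := by
  have hval : ∀ j ∈ T, w j = ∑ i ∈ Finset.univ.filter (fun i => g i = g j), w i := by
    intro j hj; rw [hT j hj, Finset.sum_singleton]
  have hmapeq : T.val.map w =
      (T.val.map g).map (fun a => ∑ i ∈ Finset.univ.filter (fun i => g i = a), w i) := by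
    rw [Multiset.map_map]
    exact Multiset.map_congr rfl (fun j hj => hval j hj)
  have hnodup : (T.val.map g).Nodup := by
    refine Multiset.Nodup.map_on ?_ T.nodup
    intro x hx y hy hxy
    have hx' := hT x hx
    have : y ∈ Finset.univ.filter (fun i => g i = g x) := by simp [hxy]
    rw [hx'] at this
    exact (Finset.mem_singleton.mp this).symm
  have hle : (T.val.map g) ≤ (Finset.univ : Finset (Fin m)).val :=
    Finset.val_le_iff.mpr (Finset.subset_univ (⟨T.val.map g, hnodup⟩ : Finset (Fin m)))
  rw [hmapeq]
  exact Multiset.map_le_map hle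

/-- For surjective routings `g₁ : Fin k → Fin m₁`, `g₂ : Fin k → Fin m₂`
with `m₁ ≥ m₂ ≥ 1` and positive weights `w`, writing `M₁`, `M₂` for the multisets of
fiber sums, we have `3·k ≥ 3·|M₁ ∩ M₂| + 2·(|M₁ − M₂| + |M₂ − M₁|)`. -/
theorem three_k_ge_cut_bound {k m₁ m₂ : ℕ} (hk : 1 ≤ k) (hm₂ : 1 ≤ m₂) (hm : m₂ ≤ m₁)
    (w : Fin k → ℕ) (hw : ∀ j, 1 ≤ w j)
    (g₁ : Fin k → Fin m₁) (hg₁ : Function.Surjective g₁)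
    (g₂ : Fin k → Fin m₂) (hg₂ : Function.Surjective g₂) :
    3 * k ≥
      3 * Multiset.card (fiberSums g₁ w ∩ fiberSums g₂ w) +
        2 * (Multiset.card (fiberSums g₁ w - fiberSums g₂ w) +
             Multiset.card (fiberSums g₂ w - fiberSums g₁ w)) := by
  set M₁ := fiberSums g₁ w
  set M₂ := fiberSums g₂ w
  set T := lonely g₁ ∩ lonely g₂ with hTdef
  -- T's weights embed into both multisets
  have hle1 : T.val.map w ≤ M₁ :=
    map_le_fiberSums g₁ w T (fun j hj => by
      have := Finset.mem_inter.mp hj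
      simpa [lonely] using this.1)
  have hle2 : T.val.map w ≤ M₂ :=
    map_le_fiberSums g₂ w T (fun j hj => by
      have := Finset.mem_inter.mp hj
      simpa [lonely] using this.2)
  have hleI : T.val.map w ≤ M₁ ∩ M₂ := Multiset.le_inter hle1 hle2
  have hI : T.card ≤ Multiset.card (M₁ ∩ M₂) := by
    have := Multiset.card_le_card hleI
    simpa using this
  -- cardinalities
  have hc1 : Multiset.card M₁ = m₁ := card_fiberSums g₁ w
  have hc2 : Multiset.card M₂ = m₂ := card_fiberSums g₂ w
  have hd1 : Multiset.card (M₁ - M₂) + Multiset.card (M₁ ∩ M₂) = m₁ := by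
    rw [← Multiset.card_add, Multiset.sub_add_inter, hc1]
  have hd2 : Multiset.card (M₂ - M₁) + Multiset.card (M₂ ∩ M₁) = m₂ := by
    rw [← Multiset.card_add, Multiset.sub_add_inter, hc2]
  have hcomm : Multiset.card (M₂ ∩ M₁) = Multiset.card (M₁ ∩ M₂) := by
    rw [Multiset.inter_comm]
  -- lonely counts
  have hs1 : 2 * m₁ ≤ (lonely g₁).card + k := lonely_count g₁ hg₁
  have hs2 : 2 * m₂ ≤ (lonely g₂).card + k := lonely_count g₂ hg₂
  have hT : (lonely g₁).card + (lonely g₂).card ≤ T.card + k := by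
    have := Finset.card_inter_add_card_union (lonely g₁) (lonely g₂)
    rw [← hTdef] at this
    have hu : ((lonely g₁) ∪ (lonely g₂)).card ≤ k := by
      have := Finset.card_le_univ ((lonely g₁) ∪ (lonely g₂))
      simpa using this
    omega
  omega
end

section
/- Let k ≥ 1 and consider the encoded st-DAG with flow (A, n, src, dst, f) with n = 2, arc type A = Fin k, src a = 0 and dst a = 1 for every a, and f : Fin k → ℕ with f a ≥ 1 for all a (k parallel arcs from source to sink). If this instance admits a flow decomposition into k paths with weights w₁,…,w_k, then the multiset {w₁,…,w_k} equals the multiset {f a : a ∈ Fin k}. -/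
/-- For the instance consisting of `k` parallel arcs from the source
to the sink (n = 2, arc type `Fin k`, positive flow values), any flow decomposition
into `k` paths has weight multiset equal to the multiset of flow values. -/
theorem parallel_arcs_unique_weights {k : ℕ} (hk : 1 ≤ k)
    (f : Fin k → ℕ) (hf : ∀ a, 1 ≤ f a)
    (p : Fin k → List (Fin k)) (w : Fin k → ℕ)
    (hdecomp : IsFlowDecomp (fun _ => (0 : Fin 2)) (fun _ => (1 : Fin 2)) f p w) :
    Finset.univ.val.map w = Finset.univ.val.map f := by
  obtain ⟨hpath, hw, hsum⟩ := hdecomp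
  have hsingle : ∀ i, ∃ a, p i = [a] := by
    intro i
    obtain ⟨hne, hhead, hlast, hchain⟩ := hpath i
    match hp : p i with
    | [] => exact absurd hp hne
    | [a] => exact ⟨a, rfl⟩
    | a :: b :: l =>
      rw [hp] at hchain
      have h1 : (1 : Fin 2) = 0 := hchain.rel_head
      exact absurd h1 (by decide)
  choose g hg using hsingle
  have hsum' : ∀ a, f a = ∑ i, if a = g i then w i else 0 := by
    intro a
    rw [hsum a]
    refine Finset.sum_congr rfl fun i _ => ?_
    rw [hg i]
    simp
  have hsurj : Function.Surjective g := by
    intro a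
    by_contra h
    push_neg at h
    have : f a = 0 := by
      rw [hsum' a]
      refine Finset.sum_eq_zero fun i _ => ?_
      simp [(h i).symm]
    exact absurd this (by have := hf a; omega)
  have hbij : Function.Bijective g :=
    ⟨Finite.injective_iff_surjective.mpr hsurj, hsurj⟩
  have hfg : ∀ i, f (g i) = w i := by
    intro i
    rw [hsum' (g i)]
    rw [Finset.sum_eq_single i]
    · simp
    · intro j _ hj
      have : g i ≠ g j := fun h => hj (hbij.1 h).symm
      simp [this]
    · simp
  have e := Equiv.ofBijective g hbij
  calc Finset.univ.val.map w = Finset.univ.val.map (f ∘ g) := by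
        refine Multiset.map_congr rfl fun i _ => (hfg i).symm
    _ = (Finset.univ.val.map g).map f := by rw [Multiset.map_map]
    _ = Finset.univ.val.map f := by
        congr 1
        have : Finset.univ.map ⟨g, hbij.1⟩ = Finset.univ := by
          apply Finset.eq_univ_of_card
          simp
        calc Finset.univ.val.map g = (Finset.univ.map ⟨g, hbij.1⟩).val := rfl
          _ = Finset.univ.val := by rw [this]
end
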